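/- Let n be an integer, t > 0, and let γ : [0,t] → ℝ³ be a continuously differentiable curve with γ₁(s)² + γ₂(s)² ≠ 0 for all s ∈ [0,t]. Define the vector field F(x) = (2n/(x₁²+x₂²)) · (−x₂, x₁, 0) and the function w(x) = ((x₁ + i x₂)/√(x₁²+x₂²))^{2n} with values in the unit circle of ℂ. Then exp( i ∫₀ᵗ F(γ(s)) · γ′(s) ds ) = w(γ(t)) · w(γ(0))⁻¹. -/

import Mathlib

/-!
Write `z = x₁ + i x₂`. Then `w = (z / z̄) ^ n`, and along the curve `u = w ∘ γ` solves the
linear equation `u' = i (2n Im (z'/z)) u`, whose coefficient `2n Im (z'/z)` is exactly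
`F(γ) · γ'`. Hence `exp(-i ∫ F(γ) · γ') · u` has vanishing derivative, so it is constant.
-/

open Set Complex intervalIntegral ComplexConjugate

theorem HasDerivAt.div_conj {z : ℝ → ℂ} {z' : ℂ} {s : ℝ} (hz : HasDerivAt z z' s)
    (h0 : z s ≠ 0) :
    HasDerivAt (fun s => z s / conj (z s)) (↑(2 * (z' / z s).im) * I * (z s / conj (z s))) s := by
  have h0' : conj (z s) ≠ 0 := (map_ne_zero _).2 h0
  refine (hz.div hz.star h0').congr_deriv ?_
  rw [← sub_conj, map_div₀]
  simp only [Complex.star_def]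
  field_simp

theorem HasDerivAt.div_conj_zpow {z : ℝ → ℂ} {z' : ℂ} {s : ℝ} (hz : HasDerivAt z z' s)
    (h0 : z s ≠ 0) (n : ℤ) :
    HasDerivAt (fun s => (z s / conj (z s)) ^ n)
      (I * ↑(2 * n * (z' / z s).im) * (z s / conj (z s)) ^ n) s := by
  have h0' : conj (z s) ≠ 0 := (map_ne_zero _).2 h0
  have hq : z s / conj (z s) ≠ 0 := div_ne_zero h0 h0'
  refine ((hasDerivAt_zpow n _ (Or.inl hq)).comp s (hz.div_conj h0)).congr_deriv ?_
  rw [zpow_sub_one₀ hq]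
  field_simp
  push_cast
  ring

theorem Complex.div_norm_sq_eq_div_conj (z : ℂ) : (z / ‖z‖) ^ 2 = z / conj z := by
  rcases eq_or_ne z 0 with rfl | hz
  · simp
  rw [div_pow, ← ofReal_pow, ← normSq_eq_norm_sq, ← mul_conj, sq, mul_div_mul_left _ _ hz]

noncomputable def complexCoord : EuclideanSpace ℝ (Fin 3) →L[ℝ] ℂ :=
  equivRealProdCLM.symm.toContinuousLinearMap.comp
    ((EuclideanSpace.proj 0).prod (EuclideanSpace.proj 1))

theorem complexCoord_apply (x : EuclideanSpace ℝ (Fin 3)) : complexCoord x = x 0 + x 1 * I := by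
  simp [complexCoord, equivRealProdCLM_symm_apply]

theorem inner_angularField_eq_mul_im_div (c : ℝ) (x v : EuclideanSpace ℝ (Fin 3)) :
    inner ℝ ((c / (x 0 ^ 2 + x 1 ^ 2)) •
        (EuclideanSpace.equiv (Fin 3) ℝ).symm ![-(x 1), x 0, 0]) v =
      c * (complexCoord v / complexCoord x).im := by
  simp [complexCoord_apply, div_im, normSq_add_mul_I, PiLp.inner_apply, Fin.sum_univ_three]
  ring

theorem eq_exp_integral_mul_of_hasDerivAt {a b : ℝ} (hab : a ≤ b) {u g : ℝ → ℂ}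
    (hg : ContinuousOn g (Icc a b)) (hu : ∀ s ∈ Icc a b, HasDerivAt u (g s * u s) s) :
    u b = exp (∫ s in a..b, g s) * u a := by
  set G : ℝ → ℂ := fun x => ∫ s in a..x, g s
  have hG : ∀ x ∈ Ico a b, HasDerivWithinAt G (g x) (Ici x) x := fun x hx =>
    have hIcc : Icc a b ∈ nhdsWithin x (Ioi x) := Icc_mem_nhdsGT_of_mem hx
    integral_hasDerivWithinAt_right
      (ContinuousOn.intervalIntegrable_of_Icc hx.1 (hg.mono (Icc_subset_Icc_right hx.2.le)))
      ((hg.stronglyMeasurableAtFilter_nhdsWithin measurableSet_Icc x).filter_mono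
        (nhdsWithin_le_of_mem hIcc))
      ((hg x (Ico_subset_Icc_self hx)).mono_of_mem_nhdsWithin hIcc)
  have hGc : ContinuousOn G (Icc a b) := by
    simpa only [uIcc_of_le hab] using
      continuousOn_primitive_interval (hg.integrableOn_Icc.mono_set (uIcc_of_le hab).subset)
  have hconst := constant_of_has_deriv_right_zero (f := fun x => exp (-G x) * u x)
    (((hGc.neg).cexp).mul fun x hx => (hu x hx).continuousAt.continuousWithinAt)
    (fun x hx => by
      simpa [mul_comm (g x), mul_assoc] using!
        ((hG x hx).neg.cexp.mul (hu x (Ico_subset_Icc_self hx)).hasDerivWithinAt)) b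
    (right_mem_Icc.2 hab)
  simp only [G, integral_same, neg_zero, exp_zero, one_mul, exp_neg] at hconst
  rw [← hconst, ← mul_assoc, mul_inv_cancel₀ (exp_ne_zero _), one_mul]

theorem stmt6 (n : ℤ) (t : ℝ) (ht : 0 < t) (γ γ' : ℝ → EuclideanSpace ℝ (Fin 3))
    (hγ : ∀ s ∈ Set.Icc (0 : ℝ) t, HasDerivAt γ (γ' s) s)
    (hγ' : ContinuousOn γ' (Set.Icc (0 : ℝ) t))
    (hρ : ∀ s ∈ Set.Icc (0 : ℝ) t, (γ s 0) ^ 2 + (γ s 1) ^ 2 ≠ 0)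
    (F : EuclideanSpace ℝ (Fin 3) → EuclideanSpace ℝ (Fin 3))
    (hF : ∀ x, F x = (2 * (n : ℝ) / ((x 0) ^ 2 + (x 1) ^ 2)) •
        (EuclideanSpace.equiv (Fin 3) ℝ).symm ![-(x 1), x 0, 0])
    (w : EuclideanSpace ℝ (Fin 3) → ℂ)
    (hw : ∀ x, w x = (((x 0 : ℂ) + Complex.I * (x 1 : ℂ)) /
        ((Real.sqrt ((x 0) ^ 2 + (x 1) ^ 2) : ℝ) : ℂ)) ^ (2 * n)) :
    Complex.exp (Complex.I * ((∫ s in (0 : ℝ)..t, (inner ℝ (F (γ s)) (γ' s) : ℝ)) : ℂ)) =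
      w (γ t) * (w (γ 0))⁻¹ := by
  have hz : ∀ s ∈ Icc 0 t, HasDerivAt (complexCoord ∘ γ) (complexCoord (γ' s)) s :=
    fun s hs => complexCoord.hasFDerivAt.comp_hasDerivAt s (hγ s hs)
  have hz0 : ∀ s ∈ Icc 0 t, complexCoord (γ s) ≠ 0 := fun s hs h =>
    hρ s hs <| by rw [← normSq_add_mul_I, ← complexCoord_apply, h, map_zero]
  have hF_inner : ∀ x v, inner ℝ (F x) v = 2 * n * (complexCoord v / complexCoord x).im :=
    fun x v => by rw [hF]; exact inner_angularField_eq_mul_im_div _ _ _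
  have hw_phase : ∀ x, w x = (complexCoord x / conj (complexCoord x)) ^ n := fun x => by
    rw [hw, zpow_mul, complexCoord_apply, ← norm_add_mul_I, mul_comm I,
      ← div_norm_sq_eq_div_conj, zpow_ofNat]
  have hcont :
      ContinuousOn (fun s => I * ↑(2 * n * (complexCoord (γ' s) / complexCoord (γ s)).im))
        (Icc 0 t) :=
    continuousOn_const.mul <| continuous_ofReal.comp_continuousOn <| continuousOn_const.mul <|
      continuous_im.comp_continuousOn <|
        (complexCoord.continuous.comp_continuousOn hγ').div
          (fun s hs => (hz s hs).continuousAt.continuousWithinAt) hz0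
  have hphase := eq_exp_integral_mul_of_hasDerivAt ht.le hcont fun s hs =>
    (hz s hs).div_conj_zpow (hz0 s hs) n
  have hq0 : complexCoord (γ 0) / conj (complexCoord (γ 0)) ≠ 0 :=
    div_ne_zero (hz0 0 (left_mem_Icc.2 ht.le)) ((map_ne_zero _).2 (hz0 0 (left_mem_Icc.2 ht.le)))
  simp only [Function.comp_apply] at hphase
  rw [hw_phase, hw_phase, hphase, mul_inv_cancel_right₀ (zpow_ne_zero n hq0), integral_const_mul]
  simp only [hF_inner]
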